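/- A nested-sequent of MB+ is valid if and only if the MB+-formula τ of it is valid, where τ(Γ⇒Δ) = ⋀Γ → ⋁Δ and τ(Γ⇒Δ, [T₁]^{d₁}_{α₁}, …, [Tₙ]^{dₙ}_{αₙ}) = (⋀Γ → ⋁Δ) ∨ □^{d₁}_{α₁} τ(T₁) ∨ … ∨ □^{dₙ}_{αₙ} τ(Tₙ) with dᵢ ∈ {=, o, c} as allowed in MB+. -/

import Mathlib

set_option maxHeartbeats 1000000

namespace MBQL

/-- The fixed finite set `J ⊆ [0,1]` of inner-product values, with `0, 1 ∈ J`. -/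
structure MBParams where
  J : Set ℝ
  finite : J.Finite
  subI : J ⊆ Set.Icc (0:ℝ) 1
  zero_mem : (0:ℝ) ∈ J
  one_mem : (1:ℝ) ∈ J

/-- Formulas of **MB+**: generated from variables, `⊤`, `⊥` by `¬`, `∧` and
the modalities `□^=_α` (`α ∈ J`, `0 < α ≤ 1`), `□^o_α` (`α ∈ J`) and `□^c_0`. -/
inductive MBPForm (Pm : MBParams) : Type
  | var : ℕ → MBPForm Pm
  | top : MBPForm Pm
  | bot : MBPForm Pm
  | neg : MBPForm Pm → MBPForm Pm
  | conj : MBPForm Pm → MBPForm Pm → MBPForm Pm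
  | boxe : (α : ℝ) → α ∈ Pm.J → 0 < α → MBPForm Pm → MBPForm Pm
  | boxo : (α : ℝ) → α ∈ Pm.J → MBPForm Pm → MBPForm Pm
  | boxc0 : MBPForm Pm → MBPForm Pm

noncomputable instance {Pm : MBParams} : DecidableEq (MBPForm Pm) := Classical.decEq _

/-- Valuation of an MB+-formula, given worlds `S`, a relation `R` and a
valuation `V` of the propositional variables. -/
def MBPForm.valR {Pm : MBParams} {S : Type} (R : S → S → ℝ) (V : ℕ → Set S) :
    MBPForm Pm → Set S
  | .var n => V n
  | .top => Set.univ
  | .bot => ∅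
  | .neg A => (A.valR R V)ᶜ
  | .conj A B => A.valR R V ∩ B.valR R V
  | .boxe α _ _ A => {s | ∀ u, R s u = α → u ∈ A.valR R V}
  | .boxo α _ A => {s | ∀ u, α < R s u → u ∈ A.valR R V}
  | .boxc0 A => {s | ∀ u, u ∈ A.valR R V}

/-- An EQL-frame. -/
structure EQLFrame where
  S : Type
  nonempty : Nonempty S
  R : S → S → ℝ
  mem_Icc : ∀ s t, R s t ∈ Set.Icc (0:ℝ) 1
  eq_one_iff : ∀ s t, (R s t = 1 ↔ s = t)
  symm : ∀ s t, R s t = R t s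

/-- An MB-realization for the language of MB+. -/
structure MBPRealization (Pm : MBParams) where
  F : EQLFrame
  P : Set (Set F.S)
  univ_mem : Set.univ ∈ P
  empty_mem : ∅ ∈ P
  inter_mem : ∀ X ∈ P, ∀ Y ∈ P, X ∩ Y ∈ P
  compl_mem : ∀ X ∈ P, Xᶜ ∈ P
  boxe_mem : ∀ α ∈ Pm.J, 0 < α → ∀ X ∈ P, {s | ∀ u, F.R s u = α → u ∈ X} ∈ P
  boxo_mem : ∀ α ∈ Pm.J, ∀ X ∈ P, {s | ∀ u, α < F.R s u → u ∈ X} ∈ P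
  boxc0_mem : ∀ X ∈ P, {s | ∀ u, u ∈ X} ∈ P
  V : ℕ → Set F.S
  V_mem : ∀ n, V n ∈ P

/-- The extended valuation in an MB+-realization. -/
def MBPRealization.val {Pm : MBParams} (M : MBPRealization Pm) (A : MBPForm Pm) :
    Set M.F.S := A.valR M.F.R M.V

/-- Validity of an MB+-formula. -/
def MBPValid {Pm : MBParams} (A : MBPForm Pm) : Prop :=
  ∀ (M : MBPRealization Pm) (s : M.F.S), s ∈ M.val A

/-- Bracket labels for nested-sequents of MB+: `[·]^=_α` (`0 < α ≤ 1`),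
`[·]^o_α` (`α ≠ 1`) and `[·]^c_0`. -/
inductive PLab (Pm : MBParams) : Type
  | eq : (α : ℝ) → α ∈ Pm.J → 0 < α → PLab Pm
  | o : (α : ℝ) → α ∈ Pm.J → α ≠ 1 → PLab Pm
  | c0 : PLab Pm

mutual
/-- Nested-sequents of MB+. -/
inductive PNSeq (Pm : MBParams) : Type
  | node : Finset (MBPForm Pm) → Finset (MBPForm Pm) → PNSeqs Pm → PNSeq Pm
/-- A finite list of labelled child nested-sequents of MB+. -/
inductive PNSeqs (Pm : MBParams) : Type
  | nil : PNSeqs Pm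
  | cons : PLab Pm → PNSeq Pm → PNSeqs Pm → PNSeqs Pm
end

/-- The `i`-th labelled child. -/
def PNSeqs.get {Pm : MBParams} : PNSeqs Pm → ℕ → Option (PLab Pm × PNSeq Pm)
  | .nil, _ => none
  | .cons l t _, 0 => some (l, t)
  | .cons _ _ ts, n+1 => ts.get n

/-- `PSubAt t p u`: the subtree of `t` at the node address `p` is `u`. -/
inductive PSubAt {Pm : MBParams} : PNSeq Pm → List ℕ → PNSeq Pm → Prop
  | here (t : PNSeq Pm) : PSubAt t [] t
  | there {Γ Δ : Finset (MBPForm Pm)} {ts : PNSeqs Pm} {i : ℕ} {l : PLab Pm}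
      {u v : PNSeq Pm} {p : List ℕ} :
      PNSeqs.get ts i = some (l, u) → PSubAt u p v → PSubAt (.node Γ Δ ts) (i :: p) v

mutual
/-- Replace the sequent at the node with address `p` by `Γ' ⇒ Δ'`. -/
def PNSeq.setSeq {Pm : MBParams} :
    PNSeq Pm → List ℕ → Finset (MBPForm Pm) → Finset (MBPForm Pm) → PNSeq Pm
  | .node _ _ ts, [], Γ', Δ' => .node Γ' Δ' ts
  | .node Γ Δ ts, i :: p, Γ', Δ' => .node Γ Δ (PNSeqs.setSeqs ts i p Γ' Δ')
def PNSeqs.setSeqs {Pm : MBParams} :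
    PNSeqs Pm → ℕ → List ℕ → Finset (MBPForm Pm) → Finset (MBPForm Pm) → PNSeqs Pm
  | .nil, _, _, _, _ => .nil
  | .cons l t ts, 0, p, Γ', Δ' => .cons l (t.setSeq p Γ' Δ') ts
  | .cons l t ts, n+1, p, Γ', Δ' => .cons l t (PNSeqs.setSeqs ts n p Γ' Δ')
end

/-- Append a labelled child at the end of a children list. -/
def PNSeqs.snoc {Pm : MBParams} : PNSeqs Pm → PLab Pm → PNSeq Pm → PNSeqs Pm
  | .nil, l, u => .cons l u .nil
  | .cons l' t ts, l, u => .cons l' t (ts.snoc l u)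

mutual
/-- Add a new child `[u]_l` at the node with address `p`. -/
def PNSeq.addChild {Pm : MBParams} : PNSeq Pm → List ℕ → PLab Pm → PNSeq Pm → PNSeq Pm
  | .node Γ Δ ts, [], l, u => .node Γ Δ (ts.snoc l u)
  | .node Γ Δ ts, i :: p, l, u => .node Γ Δ (PNSeqs.addChilds ts i p l u)
def PNSeqs.addChilds {Pm : MBParams} :
    PNSeqs Pm → ℕ → List ℕ → PLab Pm → PNSeq Pm → PNSeqs Pm
  | .nil, _, _, _, _ => .nil
  | .cons l' t ts, 0, p, l, u => .cons l' (t.addChild p l u) ts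
  | .cons l' t ts, n+1, p, l, u => .cons l' t (PNSeqs.addChilds ts n p l u)
end

/-- `A ∨ B`. -/
def MBPForm.or {Pm : MBParams} (A B : MBPForm Pm) : MBPForm Pm :=
  .neg (.conj (.neg A) (.neg B))

/-- `A → B := ¬A ∨ B`. -/
def MBPForm.imp {Pm : MBParams} (A B : MBPForm Pm) : MBPForm Pm := (MBPForm.neg A).or B

/-- Conjunction of a list of formulas. -/
def pconjList {Pm : MBParams} : List (MBPForm Pm) → MBPForm Pm
  | [] => .top
  | [A] => A
  | A :: B :: rest => .conj A (pconjList (B :: rest))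

/-- Disjunction of a list of formulas. -/
def pdisjList {Pm : MBParams} : List (MBPForm Pm) → MBPForm Pm
  | [] => .bot
  | [A] => A
  | A :: B :: rest => (A).or (pdisjList (B :: rest))

/-- `⋀Γ → ⋁Δ`. -/
noncomputable def pseqForm {Pm : MBParams} (Γ Δ : Finset (MBPForm Pm)) : MBPForm Pm :=
  (pconjList Γ.toList).imp (pdisjList Δ.toList)

/-- The box corresponding to a bracket label of MB+. -/
def PLab.box {Pm : MBParams} : PLab Pm → MBPForm Pm → MBPForm Pm
  | .eq α h h0, A => .boxe α h h0 A
  | .o α h _, A => .boxo α h A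
  | .c0, A => .boxc0 A

mutual
/-- The interpretation `τ` of an MB+ nested-sequent as an MB+-formula. -/
noncomputable def PNSeq.tau {Pm : MBParams} : PNSeq Pm → MBPForm Pm
  | .node Γ Δ ts => PNSeqs.tauAux (pseqForm Γ Δ) ts
noncomputable def PNSeqs.tauAux {Pm : MBParams} : MBPForm Pm → PNSeqs Pm → MBPForm Pm
  | A, .nil => A
  | A, .cons l t ts => PNSeqs.tauAux (A.or (l.box t.tau)) ts
end

/-- The condition imposed on `R(E(n₁), E(n₂))` by a bracket label of MB+. -/
def PLabCond {Pm : MBParams} (l : PLab Pm) (r : ℝ) : Prop :=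
  match l with
  | .eq α _ _ => r = α
  | .o α _ _ => α < r
  | .c0 => True

/-- `E` is an embedding of the MB+ nested-sequent `t` into `M`. -/
def PIsEmb {Pm : MBParams} (M : MBPRealization Pm) (t : PNSeq Pm)
    (E : List ℕ → M.F.S) : Prop :=
  ∀ p Γ Δ ts i l u, PSubAt t p (.node Γ Δ ts) → PNSeqs.get ts i = some (l, u) →
    PLabCond l (M.F.R (E p) (E (p ++ [i])))

/-- The MB+ nested-sequent `t` is false in `M` under `E`. -/
def PFalseUnder {Pm : MBParams} (M : MBPRealization Pm) (t : PNSeq Pm)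
    (E : List ℕ → M.F.S) : Prop :=
  ∀ p Γ Δ ts, PSubAt t p (.node Γ Δ ts) →
    (∀ A ∈ Γ, E p ∈ M.val A) ∧ (∀ A ∈ Δ, E p ∉ M.val A)

/-- Validity of an MB+ nested-sequent. -/
def PNSValid {Pm : MBParams} (t : PNSeq Pm) : Prop :=
  ∀ (M : MBPRealization Pm) (E : List ℕ → M.F.S), PIsEmb M t E → ¬ PFalseUnder M t E

/-- Descriptors of the left-rule boxes `□^=_α`, `□^o_α` of MB+. -/
inductive PBox (Pm : MBParams) : Type
  | e : (α : ℝ) → α ∈ Pm.J → 0 < α → PBox Pm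
  | o : (α : ℝ) → α ∈ Pm.J → PBox Pm

/-- The box formula corresponding to a box descriptor. -/
def PBox.box {Pm : MBParams} : PBox Pm → MBPForm Pm → MBPForm Pm
  | .e α h h0, A => .boxe α h h0 A
  | .o α h, A => .boxo α h A

/-- Side condition of the rules (□L), (□L sym) of NSMB+:
`(d = d' = "=" and α = β)`, or `(d = d' = o and α < β)`, or
`(d = o, d' = "=" and α < β)`. -/
def PC1 {Pm : MBParams} : PBox Pm → PLab Pm → Prop
  | .e α _ _, .eq β _ _ => α = β
  | .o α _, .o β _ _ => α < β
  | .o α _, .eq β _ _ => α < β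
  | _, _ => False

/-- Side condition of the rule (□L self) of NSMB+:
`(d = "=" and α = 1)` or `(d = o and α ≠ 1)`. -/
def PC2 {Pm : MBParams} : PBox Pm → Prop
  | .e α _ _ => α = 1
  | .o α _ => α ≠ 1

/-- Provability in the nested-sequent calculus **NSMB+**; the boolean records
whether (cut) may be used. -/
inductive PProvable {Pm : MBParams} : Bool → PNSeq Pm → Prop
  /-- axiom `‖A, Γ ⇒ Δ, A, T‖` -/
  | axId {cut : Bool} {t : PNSeq Pm} {p Γ Δ ts A} :
      PSubAt t p (.node Γ Δ ts) → A ∈ Γ → A ∈ Δ → PProvable cut t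
  /-- axiom `‖Γ ⇒ Δ, ⊤, T‖` -/
  | axTop {cut : Bool} {t : PNSeq Pm} {p Γ Δ ts} :
      PSubAt t p (.node Γ Δ ts) → MBPForm.top ∈ Δ → PProvable cut t
  /-- axiom `‖⊥, Γ ⇒ Δ, T‖` -/
  | axBot {cut : Bool} {t : PNSeq Pm} {p Γ Δ ts} :
      PSubAt t p (.node Γ Δ ts) → MBPForm.bot ∈ Γ → PProvable cut t
  /-- axiom `‖Γ ⇒ Δ, □^o_1 A, T‖` -/
  | axBoxO1 {cut : Bool} {t : PNSeq Pm} {p Γ Δ ts A} :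
      PSubAt t p (.node Γ Δ ts) → MBPForm.boxo 1 Pm.one_mem A ∈ Δ → PProvable cut t
  /-- rule (cut) -/
  | cutR {t : PNSeq Pm} {p Γ Δ ts A} :
      PSubAt t p (.node Γ Δ ts) →
      PProvable true (t.setSeq p Γ (insert A Δ)) →
      PProvable true (t.setSeq p (insert A Γ) Δ) →
      PProvable true t
  /-- rule (wL) -/
  | wL {cut : Bool} {t : PNSeq Pm} {p Γ Δ ts A} :
      PSubAt t p (.node Γ Δ ts) → PProvable cut t →
      PProvable cut (t.setSeq p (insert A Γ) Δ)
  /-- rule (wR) -/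
  | wR {cut : Bool} {t : PNSeq Pm} {p Γ Δ ts A} :
      PSubAt t p (.node Γ Δ ts) → PProvable cut t →
      PProvable cut (t.setSeq p Γ (insert A Δ))
  /-- rule (¬L) -/
  | negL {cut : Bool} {t : PNSeq Pm} {p Γ Δ ts A} :
      PSubAt t p (.node Γ Δ ts) →
      PProvable cut (t.setSeq p Γ (insert A Δ)) →
      PProvable cut (t.setSeq p (insert (MBPForm.neg A) Γ) Δ)
  /-- rule (¬R) -/
  | negR {cut : Bool} {t : PNSeq Pm} {p Γ Δ ts A} :
      PSubAt t p (.node Γ Δ ts) →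
      PProvable cut (t.setSeq p (insert A Γ) Δ) →
      PProvable cut (t.setSeq p Γ (insert (MBPForm.neg A) Δ))
  /-- rule (∧L) -/
  | andL {cut : Bool} {t : PNSeq Pm} {p Γ Δ ts A B} :
      PSubAt t p (.node Γ Δ ts) →
      PProvable cut (t.setSeq p (insert A (insert B Γ)) Δ) →
      PProvable cut (t.setSeq p (insert (MBPForm.conj A B) Γ) Δ)
  /-- rule (∧R) -/
  | andR {cut : Bool} {t : PNSeq Pm} {p Γ Δ ts A B} :
      PSubAt t p (.node Γ Δ ts) →
      PProvable cut (t.setSeq p Γ (insert A Δ)) →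
      PProvable cut (t.setSeq p Γ (insert B Δ)) →
      PProvable cut (t.setSeq p Γ (insert (MBPForm.conj A B) Δ))
  /-- rule (□L) of NSMB+ -/
  | boxL {cut : Bool} {t : PNSeq Pm} {p Γ Δ ts i l u Γ' Δ' ts' A} {b : PBox Pm} :
      PSubAt t p (.node Γ Δ ts) → PNSeqs.get ts i = some (l, u) →
      PSubAt t (p ++ [i]) (.node Γ' Δ' ts') →
      PC1 b l →
      PProvable cut (t.setSeq (p ++ [i]) (insert A Γ') Δ') →
      PProvable cut (t.setSeq p (insert (b.box A) Γ) Δ)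
  /-- rule (□L sym) of NSMB+ -/
  | boxLsym {cut : Bool} {t : PNSeq Pm} {p Γ Δ ts i l u Γ' Δ' ts' A} {b : PBox Pm} :
      PSubAt t p (.node Γ Δ ts) → PNSeqs.get ts i = some (l, u) →
      PSubAt t (p ++ [i]) (.node Γ' Δ' ts') →
      PC1 b l →
      PProvable cut (t.setSeq p (insert A Γ) Δ) →
      PProvable cut (t.setSeq (p ++ [i]) (insert (b.box A) Γ') Δ')
  /-- rule (□L self) of NSMB+ -/
  | boxLself {cut : Bool} {t : PNSeq Pm} {p Γ Δ ts A} {b : PBox Pm} :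
      PSubAt t p (.node Γ Δ ts) → PC2 b →
      PProvable cut (t.setSeq p (insert A Γ) Δ) →
      PProvable cut (t.setSeq p (insert (b.box A) Γ) Δ)
  /-- rule (□^c_0) -/
  | boxC0 {cut : Bool} {t : PNSeq Pm} {p Γ Δ ts q Γ'' Δ'' ts'' A} :
      PSubAt t p (.node Γ Δ ts) → PSubAt t q (.node Γ'' Δ'' ts'') →
      PProvable cut (t.setSeq p (insert A Γ) Δ) →
      PProvable cut (t.setSeq q (insert (MBPForm.boxc0 A) Γ'') Δ'')
  /-- rule (□R) -/
  | boxR {cut : Bool} {t : PNSeq Pm} {p Γ Δ ts A} {l : PLab Pm} :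
      PSubAt t p (.node Γ Δ ts) →
      PProvable cut (t.addChild p l (.node ∅ {A} .nil)) →
      PProvable cut (t.setSeq p Γ (insert (l.box A) Δ))
  /-- rule (= R self) -/
  | eqRself {cut : Bool} {t : PNSeq Pm} {p Γ Δ ts A} :
      PSubAt t p (.node Γ Δ ts) →
      PProvable cut (t.setSeq p Γ (insert A Δ)) →
      PProvable cut (t.setSeq p Γ (insert (MBPForm.boxe 1 Pm.one_mem one_pos A) Δ))

/-! Unfolding `τ` at a node, a world `s` refutes `τ(Γ ⇒ Δ, [T₁]_{l₁}, …, [Tₙ]_{lₙ})` iff `s`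
falsifies `Γ ⇒ Δ` and, for each `i`, some world in relation `lᵢ` to `s` refutes `τ(Tᵢ)`.
Inductively, `τ(u)` is refuted at `s` iff `u` is falsified by an embedding sending its root to `s`:
embeddings of the children glue into one of the whole tree, and an embedding of the tree restricts
to its subtrees. -/

section Semantics

variable {Pm : MBParams} {S : Type} (R : S → S → ℝ) (V : ℕ → Set S) (s : S)

theorem MBPForm.mem_valR_or (A B : MBPForm Pm) :
    s ∈ (A.or B).valR R V ↔ s ∈ A.valR R V ∨ s ∈ B.valR R V := by
  simp only [MBPForm.or, valR, Set.mem_compl_iff, Set.mem_inter_iff, not_and_or, not_not]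

theorem MBPForm.mem_valR_pconjList :
    ∀ L : List (MBPForm Pm), s ∈ (pconjList L).valR R V ↔ ∀ A ∈ L, s ∈ A.valR R V
  | [] => by simp [pconjList, valR]
  | [A] => by simp [pconjList]
  | A :: B :: rest => by
    simp only [pconjList, valR, Set.mem_inter_iff, mem_valR_pconjList (B :: rest),
      List.forall_mem_cons]

theorem MBPForm.mem_valR_pdisjList :
    ∀ L : List (MBPForm Pm), s ∈ (pdisjList L).valR R V ↔ ∃ A ∈ L, s ∈ A.valR R V
  | [] => by simp [pdisjList, valR]
  | [A] => by simp [pdisjList]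
  | A :: B :: rest => by
    simp only [pdisjList, mem_valR_or, mem_valR_pdisjList (B :: rest),
      List.exists_mem_cons_iff]

theorem MBPForm.mem_valR_pseqForm (Γ Δ : Finset (MBPForm Pm)) :
    s ∈ (pseqForm Γ Δ).valR R V ↔ ((∀ A ∈ Γ, s ∈ A.valR R V) → ∃ A ∈ Δ, s ∈ A.valR R V) := by
  simp only [pseqForm, MBPForm.imp, mem_valR_or, valR, Set.mem_compl_iff, mem_valR_pconjList,
    mem_valR_pdisjList, Finset.mem_toList, imp_iff_not_or]

theorem PLab.mem_valR_box (l : PLab Pm) (A : MBPForm Pm) :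
    s ∈ (l.box A).valR R V ↔ ∀ w, PLabCond l (R s w) → w ∈ A.valR R V := by
  cases l <;> simp [PLab.box, PLabCond, MBPForm.valR]

theorem PNSeqs.mem_valR_tauAux :
    ∀ (ts : PNSeqs Pm) (A : MBPForm Pm), s ∈ (ts.tauAux A).valR R V ↔
      s ∈ A.valR R V ∨ ∃ i l v, ts.get i = some (l, v) ∧ s ∈ (l.box v.tau).valR R V
  | .nil, A => by simp [tauAux, get]
  | .cons l t ts, A => by
    rw [tauAux, mem_valR_tauAux ts, MBPForm.mem_valR_or, or_assoc,
      ← Nat.or_exists_add_one (p := fun i => ∃ l' v, (cons l t ts).get i = some (l', v) ∧ _)]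
    simp [get]

theorem PNSeq.mem_valR_tau_node (Γ Δ : Finset (MBPForm Pm)) (ts : PNSeqs Pm) :
    s ∈ (PNSeq.node Γ Δ ts).tau.valR R V ↔
      s ∈ (pseqForm Γ Δ).valR R V ∨
        ∃ i l v, ts.get i = some (l, v) ∧ s ∈ (l.box v.tau).valR R V := by
  rw [PNSeq.tau, PNSeqs.mem_valR_tauAux]

end Semantics

section Embedding

variable {Pm : MBParams} (M : MBPRealization Pm)

theorem pIsEmb_node_iff {Γ Δ : Finset (MBPForm Pm)} {ts : PNSeqs Pm} {E : List ℕ → M.F.S} :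
    PIsEmb M (.node Γ Δ ts) E ↔ ∀ i l v, ts.get i = some (l, v) →
      PLabCond l (M.F.R (E []) (E [i])) ∧ PIsEmb M v (fun q => E (i :: q)) := by
  constructor
  · intro h i l v hget
    exact ⟨h [] Γ Δ ts i l v (.here _) hget,
      fun q _ _ _ j _ _ hsub hget' => h (i :: q) _ _ _ j _ _ (.there hget hsub) hget'⟩
  · rintro h p Γ' Δ' ts' j l' v' hsub hget'
    cases hsub with
    | here => exact (h j l' v' hget').1
    | there hget hsub => exact (h _ _ _ hget).2 _ _ _ _ _ _ _ hsub hget'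

theorem pFalseUnder_node_iff {Γ Δ : Finset (MBPForm Pm)} {ts : PNSeqs Pm}
    {E : List ℕ → M.F.S} :
    PFalseUnder M (.node Γ Δ ts) E ↔
      ((∀ A ∈ Γ, E [] ∈ M.val A) ∧ (∀ A ∈ Δ, E [] ∉ M.val A)) ∧
        ∀ i l v, ts.get i = some (l, v) → PFalseUnder M v (fun q => E (i :: q)) := by
  constructor
  · intro h
    exact ⟨h [] Γ Δ ts (.here _),
      fun i l v hget q _ _ _ hsub => h (i :: q) _ _ _ (.there hget hsub)⟩
  · rintro ⟨hroot, hchild⟩ p Γ' Δ' ts' hsub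
    cases hsub with
    | here => exact hroot
    | there hget hsub => exact hchild _ _ _ hget _ _ _ _ hsub

theorem PNSeqs.sizeOf_lt_of_get_eq_some :
    ∀ {ts : PNSeqs Pm} {i : ℕ} {l : PLab Pm} {v : PNSeq Pm},
      ts.get i = some (l, v) → sizeOf v < sizeOf ts
  | .cons l' t ts, 0, l, v, h => by
    obtain ⟨rfl, rfl⟩ : l' = l ∧ t = v := by simpa [get] using h
    simp only [cons.sizeOf_spec]
    omega
  | .cons _ _ ts, _ + 1, _, _, h => by
    have := sizeOf_lt_of_get_eq_some (ts := ts) h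
    simp only [cons.sizeOf_spec]
    omega

theorem notMem_val_tau_iff :
    ∀ (u : PNSeq Pm) (s : M.F.S),
      s ∉ M.val u.tau ↔ ∃ E : List ℕ → M.F.S, E [] = s ∧ PIsEmb M u E ∧ PFalseUnder M u E
  | .node Γ Δ ts, s => by
    have ih : ∀ i l v, ts.get i = some (l, v) → ∀ w,
        w ∉ M.val v.tau ↔ ∃ E, E [] = w ∧ PIsEmb M v E ∧ PFalseUnder M v E :=
      fun i l v hget w => notMem_val_tau_iff v w
    simp only [MBPRealization.val, PNSeq.mem_valR_tau_node, MBPForm.mem_valR_pseqForm,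
      PLab.mem_valR_box, pIsEmb_node_iff, pFalseUnder_node_iff]
    constructor
    · intro h
      push Not at h
      obtain ⟨hroot, hchild⟩ := h
      have hchildEmb : ∀ i, ∃ F : List ℕ → M.F.S, ∀ l v, ts.get i = some (l, v) →
          PLabCond l (M.F.R s (F [])) ∧ PIsEmb M v F ∧ PFalseUnder M v F := by
        intro i
        cases hget : ts.get i with
        | none => exact ⟨fun _ => s, by simp⟩
        | some lv =>
          obtain ⟨w, hcond, hw⟩ := hchild i lv.1 lv.2 hget
          obtain ⟨F, rfl, hF⟩ := (ih i lv.1 lv.2 hget w).1 hw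
          refine ⟨F, ?_⟩
          rintro l v ⟨⟩
          exact ⟨hcond, hF⟩
      choose F hF using hchildEmb
      exact ⟨fun | [] => s | i :: q => F i q, rfl,
        fun i l v hget => ⟨(hF i l v hget).1, (hF i l v hget).2.1⟩, hroot,
        fun i l v hget => (hF i l v hget).2.2⟩
    · rintro ⟨E, rfl, hEmb, hroot, hFalse⟩ (hseq | ⟨i, l, v, hget, hbox⟩)
      · obtain ⟨A, hA, hAs⟩ := hseq hroot.1
        exact hroot.2 A hA hAs
      · exact (ih i l v hget (E [i])).2 ⟨_, rfl, (hEmb i l v hget).2, hFalse i l v hget⟩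
          (hbox _ (hEmb i l v hget).1)
termination_by u => sizeOf u
decreasing_by
  have := PNSeqs.sizeOf_lt_of_get_eq_some hget
  simp only [PNSeq.node.sizeOf_spec]
  omega

end Embedding

/-- A nested-sequent of MB+ is valid iff the MB+-formula
`τ` of it is valid. -/
theorem pnsValid_iff_tau_valid {Pm : MBParams} (t : PNSeq Pm) :
    PNSValid t ↔ MBPValid t.tau := by
  constructor
  · intro hvalid M s
    by_contra hs
    obtain ⟨E, -, hEmb, hFalse⟩ := (notMem_val_tau_iff M t s).1 hs
    exact hvalid M E hEmb hFalse
  · intro hvalid M E hEmb hFalse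
    exact (notMem_val_tau_iff M t (E [])).2 ⟨E, rfl, hEmb, hFalse⟩ (hvalid M (E []))

end MBQL
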